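/- arXiv:0910.5673 — 2 statements merged into one kernel-verified Lean document; each statement's English description precedes it below -/
import Mathlib

section
/- Let 0 ≤ γ ≤ π, θ_m − θ_ℓ = γ, 0 ≤ θ_m − θ_k ≤ γ, 0 ≤ θ_k − θ_ℓ ≤ γ, and let a, b ≥ 0. Then a·sin(θ_m − θ_k) + b·sin(θ_k − θ_ℓ) ≥ min(a, b)·sin(γ). -/
open Real

theorem stmt_3 (γ θm θℓ θk a b : ℝ) (hγ0 : 0 ≤ γ) (hγπ : γ ≤ π)
    (hml : θm - θℓ = γ)
    (hmk0 : 0 ≤ θm - θk) (hmkγ : θm - θk ≤ γ)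
    (hkl0 : 0 ≤ θk - θℓ) (hklγ : θk - θℓ ≤ γ)
    (ha : 0 ≤ a) (hb : 0 ≤ b) :
    a * Real.sin (θm - θk) + b * Real.sin (θk - θℓ) ≥ min a b * Real.sin γ := by
  set x := θm - θk with hx
  set y := θk - θℓ with hy
  have hxy : x + y = γ := by rw [hx, hy]; linarith
  have hsx : 0 ≤ Real.sin x := Real.sin_nonneg_of_nonneg_of_le_pi hmk0 (hmkγ.trans hγπ)
  have hsy : 0 ≤ Real.sin y := Real.sin_nonneg_of_nonneg_of_le_pi hkl0 (hklγ.trans hγπ)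
  have hcx : Real.cos x ≤ 1 := Real.cos_le_one x
  have hcy : Real.cos y ≤ 1 := Real.cos_le_one y
  have hsum : Real.sin γ ≤ Real.sin x + Real.sin y := by
    rw [← hxy, Real.sin_add]
    nlinarith
  have hmin : min a b ≤ a := min_le_left a b
  have hmin' : min a b ≤ b := min_le_right a b
  have h0 : 0 ≤ min a b := le_min ha hb
  nlinarith [mul_le_mul_of_nonneg_right hmin hsx, mul_le_mul_of_nonneg_right hmin' hsy,
    mul_le_mul_of_nonneg_left hsum h0]
end

section
/- Let n ≥ 2, and for each i let D_i > 0, ω_i ∈ ℝ, and P_{ij} = P_{ji} ≥ 0, φ_{ij} ∈ [0, π/2). Suppose all angles θ_i lie in a closed interval [θ_ℓ, θ_m] of length γ ∈ [0, π] with θ_m, θ_ℓ attained. Then the difference of the extremal dynamics satisfies: (ω_m/D_m − Σ_k (P_{mk}/D_m) sin(θ_m − θ_k + φ_{mk})) − (ω_ℓ/D_ℓ − Σ_k (P_{ℓk}/D_ℓ) sin(θ_ℓ − θ_k + φ_{ℓk})) ≤ |ω_m/D_m − ω_ℓ/D_ℓ| − Σ_k min_{i∈{m,ℓ}} (P_{ik}/D_i)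 cos(φ_{ik}) · sin(γ) + Σ_k (P_{mk}/D_m) sin(φ_{mk}) + Σ_k (P_{ℓk}/D_ℓ) sin(φ_{ℓk}). -/
open Real

lemma perk_aux (a b φa φb x y : ℝ) (ha : 0 ≤ a) (hb : 0 ≤ b)
    (hφa : φa ∈ Set.Ico 0 (π / 2)) (hφb : φb ∈ Set.Ico 0 (π / 2))
    (hx : 0 ≤ x) (hy : 0 ≤ y) (hxy : x + y ≤ π) :
    b * Real.sin (-y + φb) - a * Real.sin (x + φa) ≤
      -(min (a * Real.cos φa) (b * Real.cos φb) * Real.sin (x + y))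
        + a * Real.sin φa + b * Real.sin φb := by
  obtain ⟨hφa0, hφa2⟩ := hφa
  obtain ⟨hφb0, hφb2⟩ := hφb
  have hca : 0 ≤ Real.cos φa := Real.cos_nonneg_of_mem_Icc ⟨by linarith [Real.pi_pos], le_of_lt hφa2⟩
  have hcb : 0 ≤ Real.cos φb := Real.cos_nonneg_of_mem_Icc ⟨by linarith [Real.pi_pos], le_of_lt hφb2⟩
  have hsa : 0 ≤ Real.sin φa := Real.sin_nonneg_of_nonneg_of_le_pi hφa0 (by linarith [Real.pi_pos])
  have hsb : 0 ≤ Real.sin φb := Real.sin_nonneg_of_nonneg_of_le_pi hφb0 (by linarith [Real.pi_pos])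
  have hsx : 0 ≤ Real.sin x := Real.sin_nonneg_of_nonneg_of_le_pi hx (by linarith)
  have hsy : 0 ≤ Real.sin y := Real.sin_nonneg_of_nonneg_of_le_pi hy (by linarith)
  have hmin : 0 ≤ min (a * Real.cos φa) (b * Real.cos φb) :=
    le_min (mul_nonneg ha hca) (mul_nonneg hb hcb)
  have h1 : min (a * Real.cos φa) (b * Real.cos φb) ≤ a * Real.cos φa := min_le_left _ _
  have h2 : min (a * Real.cos φa) (b * Real.cos φb) ≤ b * Real.cos φb := min_le_right _ _
  rw [Real.sin_add, Real.sin_add, Real.sin_add, Real.sin_neg, Real.cos_neg]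
  nlinarith [mul_nonneg hsx (sub_nonneg.mpr h1), mul_nonneg hsy (sub_nonneg.mpr h2),
    mul_nonneg hmin (mul_nonneg hsx (sub_nonneg.mpr (Real.cos_le_one y))),
    mul_nonneg hmin (mul_nonneg hsy (sub_nonneg.mpr (Real.cos_le_one x))),
    mul_nonneg (mul_nonneg ha hsa) (by linarith [Real.neg_one_le_cos x] : (0:ℝ) ≤ 1 + Real.cos x),
    mul_nonneg (mul_nonneg hb hsb) (sub_nonneg.mpr (Real.cos_le_one y))]

theorem stmt_14 {n : ℕ} (hn : 2 ≤ n) (D ω : Fin n → ℝ)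
    (P φ : Fin n → Fin n → ℝ)
    (hD : ∀ i, 0 < D i) (hP : ∀ i j, 0 ≤ P i j) (hPsym : ∀ i j, P i j = P j i)
    (hφ : ∀ i j, φ i j ∈ Set.Ico 0 (π / 2))
    (θ : Fin n → ℝ) (m ℓ : Fin n) (γ : ℝ) (hγ0 : 0 ≤ γ) (hγπ : γ ≤ π)
    (hm : ∀ i, θ i ≤ θ m) (hℓ : ∀ i, θ ℓ ≤ θ i) (hml : θ m - θ ℓ = γ) :
    (ω m / D m - ∑ k, P m k / D m * Real.sin (θ m - θ k + φ m k)) -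
        (ω ℓ / D ℓ - ∑ k, P ℓ k / D ℓ * Real.sin (θ ℓ - θ k + φ ℓ k)) ≤
      |ω m / D m - ω ℓ / D ℓ| -
        (∑ k, min (P m k / D m * Real.cos (φ m k)) (P ℓ k / D ℓ * Real.cos (φ ℓ k)))
          * Real.sin γ +
        (∑ k, P m k / D m * Real.sin (φ m k)) +
        (∑ k, P ℓ k / D ℓ * Real.sin (φ ℓ k)) := by
  have habs : ω m / D m - ω ℓ / D ℓ ≤ |ω m / D m - ω ℓ / D ℓ| := le_abs_self _
  have hsum : ∑ k, (P ℓ k / D ℓ * Real.sin (θ ℓ - θ k + φ ℓ k)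
        - P m k / D m * Real.sin (θ m - θ k + φ m k)) ≤
      ∑ k, (-(min (P m k / D m * Real.cos (φ m k)) (P ℓ k / D ℓ * Real.cos (φ ℓ k))
          * Real.sin γ) + P m k / D m * Real.sin (φ m k) + P ℓ k / D ℓ * Real.sin (φ ℓ k)) := by
    apply Finset.sum_le_sum
    intro k _
    have ha : 0 ≤ P m k / D m := div_nonneg (hP m k) (hD m).le
    have hb : 0 ≤ P ℓ k / D ℓ := div_nonneg (hP ℓ k) (hD ℓ).le
    have hx : 0 ≤ θ m - θ k := sub_nonneg.mpr (hm k)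
    have hy : 0 ≤ θ k - θ ℓ := sub_nonneg.mpr (hℓ k)
    have hxy : (θ m - θ k) + (θ k - θ ℓ) = γ := by linarith
    have := perk_aux (P m k / D m) (P ℓ k / D ℓ) (φ m k) (φ ℓ k)
      (θ m - θ k) (θ k - θ ℓ) ha hb (hφ m k) (hφ ℓ k) hx hy (by linarith)
    rw [hxy] at this
    have heq : θ ℓ - θ k = -(θ k - θ ℓ) := by ring
    rw [heq]
    linarith [this]
  rw [Finset.sum_sub_distrib] at hsum
  simp only [Finset.sum_add_distrib] at hsum
  have hrw : ∑ x : Fin n, -((min (P m x / D m * Real.cos (φ m x)) (P ℓ x / D ℓ * Real.cos (φ ℓ x))) * Real.sin γ)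
      = -((∑ x : Fin n, min (P m x / D m * Real.cos (φ m x)) (P ℓ x / D ℓ * Real.cos (φ ℓ x))) * Real.sin γ) := by
    rw [Finset.sum_neg_distrib, Finset.sum_mul]
  rw [hrw] at hsum
  linarith
end
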